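/- For s > 0, ξ₀(s) = ∫₀¹ ((1−x)/(1+x))·s·x^{s−1} dx can be expressed via Laplace transforms: ξ₀(s) = ∫₀^∞ (2e^{−t}/(1+e^{−t})²)·e^{−st} dt, 1 − ξ₀(s) = s·∫₀^∞ (2e^{−t}/(1+e^{−t}))·e^{−st} dt, and ξ₀′(s) = −∫₀^∞ (2te^{−t}/(1+e^{−t})²)·e^{−st} dt. -/

import Mathlib

/-!
Substituting `x = e^{-t}` turns `∫₀¹ g(x) dx` into `∫₀^∞ e^{-t} g(e^{-t}) dt` and `x ^ s` into
`e^{-st}`. The formula for `ξ₀'` is this substitution alone. For `ξ₀`, first integrate by parts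
against `x ^ s`, which gives `ξ₀(s) = ∫₀¹ 2 x^s / (1 + x)² dx`. For `1 - ξ₀`, use
`∫₀¹ s x^{s-1} dx = 1`, so that `1 - ξ₀(s) = ∫₀¹ (2x / (1 + x)) s x^{s-1} dx`.
-/

open MeasureTheory Real Set

noncomputable def ξ₀ (s : ℝ) : ℝ :=
  ∫ x in (0:ℝ)..1, ((1 - x) / (1 + x)) * (s * x ^ (s - 1))

noncomputable def ξ₀' (s : ℝ) : ℝ :=
  ∫ x in (0:ℝ)..1, 2 * x ^ s * Real.log x / (1 + x) ^ 2

theorem intervalIntegral_zero_one_eq_integral_Ioi_exp_neg (g : ℝ → ℝ) :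
    ∫ x in (0:ℝ)..1, g x = ∫ t in Ioi 0, exp (-t) * g (exp (-t)) := by
  have himage : (fun t ↦ exp (-t)) '' Ioi 0 = Ioo 0 1 := by
    ext x
    constructor
    · rintro ⟨t, ht, rfl⟩
      exact ⟨exp_pos _, exp_lt_one_iff.mpr (neg_lt_zero.mpr ht)⟩
    · rintro ⟨hx0, hx1⟩
      exact ⟨-log x, neg_pos.mpr (log_neg hx0 hx1), by simp [exp_log hx0]⟩
  have hderiv (t : ℝ) : HasDerivAt (fun t ↦ exp (-t)) (-exp (-t)) t := by
    simpa using (hasDerivAt_neg t).exp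
  rw [intervalIntegral.integral_of_le zero_le_one, integral_Ioc_eq_integral_Ioo, ← himage,
    integral_image_eq_integral_abs_deriv_smul measurableSet_Ioi
      (fun t _ ↦ (hderiv t).hasDerivWithinAt) (fun a _ b _ h ↦ neg_injective (exp_injective h))]
  simp [abs_of_pos (exp_pos _)]

theorem exp_neg_rpow (t s : ℝ) : exp (-t) ^ s = exp (-s * t) := by
  rw [← exp_mul]
  ring_nf

theorem one_add_ne_zero_of_mem_uIcc {x : ℝ} (hx : x ∈ uIcc 0 1) : 1 + x ≠ 0 := by
  rw [uIcc_of_le zero_le_one] at hx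
  linarith [hx.1]

theorem continuousOn_one_sub_div_one_add :
    ContinuousOn (fun x : ℝ ↦ (1 - x) / (1 + x)) (uIcc 0 1) :=
  (continuousOn_const.sub continuousOn_id).div (continuousOn_const.add continuousOn_id)
    fun _ hx ↦ one_add_ne_zero_of_mem_uIcc hx

theorem hasDerivAt_one_sub_div_one_add {x : ℝ} (hx : 1 + x ≠ 0) :
    HasDerivAt (fun x ↦ (1 - x) / (1 + x)) (-2 / (1 + x) ^ 2) x := by
  refine (((hasDerivAt_id' x).const_sub 1).div ((hasDerivAt_id' x).const_add 1) hx).congr_deriv ?_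
  field_simp
  ring

section

variable {s : ℝ}

theorem intervalIntegrable_mul_rpow_sub_one (hs : 0 < s) :
    IntervalIntegrable (fun x ↦ s * x ^ (s - 1)) volume 0 1 :=
  (intervalIntegral.intervalIntegrable_rpow' (by linarith)).const_mul s

theorem integral_mul_rpow_sub_one_zero_one (hs : 0 < s) :
    ∫ x in (0:ℝ)..1, s * x ^ (s - 1) = 1 := by
  rw [intervalIntegral.integral_const_mul, integral_rpow (Or.inl (by linarith))]
  simp [zero_rpow hs.ne', hs.ne']

theorem xi0_eq_integral_rpow (hs : 0 < s) :
    ξ₀ s = ∫ x in (0:ℝ)..1, 2 / (1 + x) ^ 2 * x ^ s := by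
  have hdiv : ContinuousOn (fun x : ℝ ↦ -2 / (1 + x) ^ 2) (uIcc 0 1) :=
    continuousOn_const.div ((continuousOn_const.add continuousOn_id).pow 2)
      fun _ hx ↦ pow_ne_zero 2 (one_add_ne_zero_of_mem_uIcc hx)
  -- both boundary terms vanish: `(1 - x) / (1 + x)` at `x = 1` and `x ^ s` at `x = 0`
  rw [ξ₀, intervalIntegral.integral_mul_deriv_eq_deriv_mul_of_hasDerivAt
    continuousOn_one_sub_div_one_add (continuousOn_id.rpow_const fun _ _ ↦ Or.inr hs.le)
    (fun x hx ↦ hasDerivAt_one_sub_div_one_add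
      (one_add_ne_zero_of_mem_uIcc (Ioo_subset_Icc_self (by simpa using hx))))
    (fun x hx ↦ by
      simpa using hasDerivAt_rpow_const (p := s) (Or.inl (by simpa using hx : x ∈ Ioo 0 1).1.ne'))
    hdiv.intervalIntegrable (intervalIntegrable_mul_rpow_sub_one hs)]
  simp [zero_rpow hs.ne', intervalIntegral.integral_neg, neg_div]

theorem one_sub_xi0_eq_integral (hs : 0 < s) :
    1 - ξ₀ s = ∫ x in (0:ℝ)..1, 2 * x / (1 + x) * (s * x ^ (s - 1)) := by
  have hint := intervalIntegrable_mul_rpow_sub_one hs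
  calc 1 - ξ₀ s = (∫ x in (0:ℝ)..1, s * x ^ (s - 1)) - ξ₀ s := by
        rw [integral_mul_rpow_sub_one_zero_one hs]
    _ = ∫ x in (0:ℝ)..1, s * x ^ (s - 1) - (1 - x) / (1 + x) * (s * x ^ (s - 1)) :=
        (intervalIntegral.integral_sub hint
          (hint.continuousOn_mul continuousOn_one_sub_div_one_add)).symm
    _ = _ := intervalIntegral.integral_congr fun x hx ↦ by
        have := one_add_ne_zero_of_mem_uIcc hx
        field_simp
        ring

theorem xi0_eq_laplace (hs : 0 < s) :
    ξ₀ s = ∫ t in Ioi 0, 2 * exp (-t) / (1 + exp (-t)) ^ 2 * exp (-s * t) := by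
  rw [xi0_eq_integral_rpow hs, intervalIntegral_zero_one_eq_integral_Ioi_exp_neg]
  refine setIntegral_congr_fun measurableSet_Ioi fun t _ ↦ ?_
  rw [exp_neg_rpow]
  ring

theorem one_sub_xi0_eq_laplace (hs : 0 < s) :
    1 - ξ₀ s = s * ∫ t in Ioi 0, 2 * exp (-t) / (1 + exp (-t)) * exp (-s * t) := by
  rw [one_sub_xi0_eq_integral hs, intervalIntegral_zero_one_eq_integral_Ioi_exp_neg,
    ← integral_const_mul]
  refine setIntegral_congr_fun measurableSet_Ioi fun t _ ↦ ?_
  have hexp : exp (-t) * exp (-t) ^ (s - 1) = exp (-s * t) := by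
    rw [exp_neg_rpow, ← exp_add]
    ring_nf
  linear_combination (2 * exp (-t) / (1 + exp (-t)) * s) * hexp

end

theorem xi0'_eq_laplace (s : ℝ) :
    ξ₀' s = -∫ t in Ioi 0, 2 * t * exp (-t) / (1 + exp (-t)) ^ 2 * exp (-s * t) := by
  rw [ξ₀', intervalIntegral_zero_one_eq_integral_Ioi_exp_neg, ← integral_neg]
  refine setIntegral_congr_fun measurableSet_Ioi fun t _ ↦ ?_
  rw [exp_neg_rpow, log_exp]
  ring

theorem xi0_laplace_representations (s : ℝ) (hs : 0 < s) :
    ξ₀ s = ∫ t in Set.Ioi (0:ℝ), (2 * Real.exp (-t) / (1 + Real.exp (-t)) ^ 2) * Real.exp (-s * t) ∧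
    1 - ξ₀ s = s * ∫ t in Set.Ioi (0:ℝ), (2 * Real.exp (-t) / (1 + Real.exp (-t))) * Real.exp (-s * t) ∧
    ξ₀' s = -∫ t in Set.Ioi (0:ℝ), (2 * t * Real.exp (-t) / (1 + Real.exp (-t)) ^ 2) * Real.exp (-s * t) :=
  ⟨xi0_eq_laplace hs, one_sub_xi0_eq_laplace hs, xi0'_eq_laplace s⟩
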